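/- Suppose the partition $\mathcal{P} = (P_1,\ldots,P_{t-1})$ of a vertex set $V$ is stable to the partition $\mathcal{V} = (V_1,\ldots,V_r)$ (with $|V_i| = n_i$, $n_1 \geq \cdots \geq n_r$). Then the integral part of every class of $\mathcal{P}$ has size at least $n_{t-1}$. -/

import Mathlib

/-- The class `A` is partial in the part `Pj`: it meets `Pj` but is not contained in it. -/
def PartIn {V : Type*} (A Pj : Set V) : Prop :=
  (A ∩ Pj).Nonempty ∧ ¬ A ⊆ Pj

/-- The integral part of `Pj`: the union of those classes `Vf i` contained in `Pj`. -/
def intPart {V : Type*} {r : ℕ} (Vf : Fin r → Set V) (Pj : Set V) : Set V :=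
  {v | ∃ i, v ∈ Vf i ∧ Vf i ⊆ Pj}

/-- The partition `Pf` is stable to `Vf`:
(i) each part contains at most one partial class;
(ii) the integral parts of partial parts all have equal size, at most the size of every
integral part;
(iii) the integral part of every part has size at least that of every partial class;
(iv) removing any integral class from its part leaves a set no larger than the integral
part of any other part. -/
def StableTo {V : Type*} {r s : ℕ} (Vf : Fin r → Set V) (Pf : Fin s → Set V) : Prop :=
  (∀ j, ∀ i i', PartIn (Vf i) (Pf j) → PartIn (Vf i') (Pf j) → i = i') ∧
  (∀ j j', (∃ i, PartIn (Vf i) (Pf j)) → (∃ i, PartIn (Vf i) (Pf j')) →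
    (intPart Vf (Pf j)).ncard = (intPart Vf (Pf j')).ncard) ∧
  (∀ j j', (∃ i, PartIn (Vf i) (Pf j)) → (¬ ∃ i, PartIn (Vf i) (Pf j')) →
    (intPart Vf (Pf j)).ncard ≤ (Pf j').ncard) ∧
  (∀ j i, (∃ j', PartIn (Vf i) (Pf j')) → (Vf i).ncard ≤ (intPart Vf (Pf j)).ncard) ∧
  (∀ j j' i, j ≠ j' → Vf i ⊆ Pf j →
    (Pf j \ Vf i).ncard ≤ (intPart Vf (Pf j')).ncard)

/-
If one of the classes `V_1, …, V_{t-1}` is partial somewhere, condition (iii) bounds every integral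
part below by its size, which is at least `n_{t-1}`. Otherwise these `t - 1` classes are integral,
each lying in one of the `t - 1` parts. If one of them lies in `P_j`, it is contained in the integral
part of `P_j`; if not, by pigeonhole two of them, `V_a` and `V_b`, lie in the same part
`P_{j'} ≠ P_j`, and condition (iv) gives `n_b ≤ |P_{j'} \ V_a| ≤ |intPart P_j|`.
-/

open Function

lemma exists_subset_of_forall_not_partIn {V ι : Type*} [Nonempty ι] {A : Set V}
    {P : ι → Set V} (hP : ∀ x, ∃ j, x ∈ P j) (hA : ∀ j, ¬ PartIn A (P j)) :
    ∃ j, A ⊆ P j := by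
  rcases A.eq_empty_or_nonempty with rfl | ⟨x, hx⟩
  · exact ⟨Classical.arbitrary ι, Set.empty_subset _⟩
  · obtain ⟨j, hj⟩ := hP x
    refine ⟨j, ?_⟩
    by_contra hAj
    exact hA j ⟨⟨x, hx, hj⟩, hAj⟩

lemma subset_intPart {V : Type*} {r : ℕ} {Vf : Fin r → Set V} {Pj : Set V} {i : Fin r}
    (h : Vf i ⊆ Pj) : Vf i ⊆ intPart Vf Pj :=
  fun _ hv => ⟨i, hv, h⟩

namespace StableTo

variable {V : Type*} [Finite V] {r s : ℕ} {Vf : Fin r → Set V} {Pf : Fin s → Set V}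

lemma ncard_le_ncard_intPart_of_subset_of_subset (hstab : StableTo Vf Pf)
    (hdisj : Pairwise (Disjoint on Vf)) {a b : Fin r} (hab : a ≠ b) {j j' : Fin s}
    (hj : j' ≠ j) (ha : Vf a ⊆ Pf j') (hb : Vf b ⊆ Pf j') :
    (Vf b).ncard ≤ (intPart Vf (Pf j)).ncard :=
  calc (Vf b).ncard ≤ (Pf j' \ Vf a).ncard :=
        Set.ncard_le_ncard (Set.subset_sdiff.mpr ⟨hb, (hdisj hab).symm⟩)
    _ ≤ (intPart Vf (Pf j)).ncard := hstab.2.2.2.2 j' j a hj ha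

theorem ncard_le_ncard_intPart (hstab : StableTo Vf Pf) (hdisj : Pairwise (Disjoint on Vf))
    (hcover : ∀ x, ∃ j, x ∈ Pf j) (hmono : Antitone fun i => (Vf i).ncard) (i₀ : Fin r)
    (hs : s ≤ i₀ + 1) (j : Fin s) : (Vf i₀).ncard ≤ (intPart Vf (Pf j)).ncard := by
  by_cases hpartial : ∃ i ≤ i₀, ∃ j', PartIn (Vf i) (Pf j')
  · obtain ⟨i, hi, hp⟩ := hpartial
    exact (hmono hi).trans (hstab.2.2.2.1 j i hp)
  push Not at hpartial
  have : Nonempty (Fin s) := ⟨j⟩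
  let e : Fin s → Fin r := Fin.castLE (by omega)
  have he : ∀ k, e k ≤ i₀ := fun k => Fin.le_def.mpr (by simp only [e, Fin.val_castLE]; omega)
  choose f hf using fun k => exists_subset_of_forall_not_partIn hcover (hpartial (e k) (he k))
  by_cases hj : ∃ k, f k = j
  · obtain ⟨k, rfl⟩ := hj
    exact (hmono (he k)).trans (Set.ncard_le_ncard (subset_intPart (hf k)))
  · obtain ⟨k₁, k₂, hfk, hk⟩ := not_injective_iff.mp fun hinj =>
      hj (Finite.surjective_of_injective hinj j)
    exact (hmono (he k₂)).trans <| hstab.ncard_le_ncard_intPart_of_subset_of_subset hdisj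
      ((Fin.castLE_injective _).ne hk) (fun h => hj ⟨k₁, h⟩) (hf k₁) (hfk ▸ hf k₂)

end StableTo

/-- If `𝒫 = (P₁,…,P_{t-1})` is stable to `𝒱 = (V₁,…,V_r)` (with `|V_i| = n_i`
antitone), then the integral part of every part of `𝒫` has size at least `n_{t-1}`. -/
theorem stmt9 {V : Type*} [Fintype V] (r t : ℕ) (ht : 3 ≤ t) (hr : t ≤ r)
    (Vf : Fin r → Set V) (Pf : Fin (t - 1) → Set V)
    (hVpart : ∀ x : V, ∃! i, x ∈ Vf i) (hPpart : ∀ x : V, ∃! j, x ∈ Pf j)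
    (hmono : ∀ i i' : Fin r, i ≤ i' → (Vf i').ncard ≤ (Vf i).ncard)
    (hstab : StableTo Vf Pf) :
    ∀ j, (Vf ⟨t - 2, by omega⟩).ncard ≤ (intPart Vf (Pf j)).ncard := by
  have hdisj : Pairwise (Disjoint on Vf) := fun i i' hii' =>
    Set.disjoint_left.mpr fun x hi hi' => hii' ((hVpart x).unique hi hi')
  exact hstab.ncard_le_ncard_intPart hdisj (fun x => (hPpart x).exists) (fun i i' => hmono i i')
    _ (show t - 1 ≤ t - 2 + 1 by omega)
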